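/- For every vector field v in the Sobolev space H^1(R^2, R^2), the L^4 norm of v satisfies |v|_{L^4} ≤ 2^{1/4} |v|_{L^2}^{1/2} |∇v|_{L^2}^{1/2}. -/

import Mathlib

/-!
Fix `y`. Applying the fundamental theorem of calculus to `‖u(·, y)‖²` on the two half-lines
through `x` gives `‖u(x, y)‖² ≤ ∫ ‖u(t, y)‖ ‖∂₁u(t, y)‖ dt`, and symmetrically
`‖u(x, y)‖² ≤ ∫ ‖u(x, t)‖ ‖∂₂u(x, t)‖ dt`. The first bound depends only on `y` and the second
only on `x`, so multiplying them and integrating over the plane, Tonelli's theorem gives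
`‖u‖₄⁴ ≤ (∫ ‖u‖ ‖∂₁u‖) (∫ ‖u‖ ‖∂₂u‖) ≤ (‖u‖₂ ‖∇u‖₂)²` by Cauchy–Schwarz.
-/

open MeasureTheory Filter Set
open scoped ENNReal RealInnerProductSpace

section

variable {α β F G : Type*} [MeasurableSpace α] [MeasurableSpace β]
  [NormedAddCommGroup F] [NormedAddCommGroup G] {μ : Measure α} {ν : Measure β}

lemma MeasureTheory.MemLp.prod_left_ae [SFinite μ] [SFinite ν] {f : α × β → F} {p : ℝ≥0∞}
    (hp₀ : p ≠ 0) (hp_top : p ≠ ∞) (hf : MemLp f p (μ.prod ν)) :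
    ∀ᵐ y ∂ν, MemLp (fun x ↦ f (x, y)) p μ := by
  filter_upwards [hf.1.prodMk_right,
    ((integrable_norm_rpow_iff hf.1 hp₀ hp_top).mpr hf).prod_left_ae] with y hmeas hint
  exact (integrable_norm_rpow_iff hmeas hp₀ hp_top).mp hint

lemma lintegral_mul_le_of_ae_le_slices [SFinite μ] [SFinite ν] {a b : α × β → ℝ≥0∞}
    {A : β → ℝ≥0∞} {B : α → ℝ≥0∞} (hA : AEMeasurable A ν) (hB : AEMeasurable B μ)
    (ha : ∀ᵐ y ∂ν, ∀ x, a (x, y) ≤ A y) (hb : ∀ᵐ x ∂μ, ∀ y, b (x, y) ≤ B x) :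
    ∫⁻ p, a p * b p ∂(μ.prod ν) ≤ (∫⁻ y, A y ∂ν) * ∫⁻ x, B x ∂μ := by
  have hab : ∀ᵐ p ∂(μ.prod ν), a p * b p ≤ B p.1 * A p.2 := by
    filter_upwards [Measure.quasiMeasurePreserving_snd.ae ha,
      Measure.quasiMeasurePreserving_fst.ae hb] with p hpa hpb
    rw [mul_comm (B p.1)]
    exact mul_le_mul' (hpa p.1) (hpb p.2)
  calc ∫⁻ p, a p * b p ∂(μ.prod ν) ≤ ∫⁻ p, B p.1 * A p.2 ∂(μ.prod ν) := lintegral_mono_ae hab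
    _ = (∫⁻ y, A y ∂ν) * ∫⁻ x, B x ∂μ := by rw [lintegral_prod_mul hB hA, mul_comm]

lemma lintegral_enorm_mul_enorm_le_eLpNorm_mul_eLpNorm {f : α → F} {g : α → G}
    (hf : AEStronglyMeasurable f μ) (hg : AEStronglyMeasurable g μ) :
    ∫⁻ x, ‖f x‖ₑ * ‖g x‖ₑ ∂μ ≤ eLpNorm f 2 μ * eLpNorm g 2 μ := by
  simpa [eLpNorm_one_eq_lintegral_enorm, enorm_mul] using
    eLpNorm_le_eLpNorm_mul_eLpNorm'_of_norm (p := 2) (q := 2) (r := 1) hf hg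
      (fun a b ↦ ‖a‖ * ‖b‖) 1 (by simp)

end

lemma two_mul_abs_le_integral_abs_deriv {g g' : ℝ → ℝ} (hd : ∀ t, HasDerivAt g (g' t) t)
    (hg : Integrable g) (hg' : Integrable g') (x : ℝ) :
    2 * |g x| ≤ ∫ t, |g' t| := by
  have hright : ∫ t in Ioi x, g' t = 0 - g x :=
    integral_Ioi_of_hasDerivAt_of_tendsto (hd x).continuousAt.continuousWithinAt
      (fun t _ ↦ hd t) hg'.integrableOn
      (tendsto_zero_of_hasDerivAt_of_integrableOn_Ioi (fun t _ ↦ hd t)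
        hg'.integrableOn hg.integrableOn (a := 0))
  have hleft : ∫ t in Iic x, g' t = g x - 0 :=
    integral_Iic_of_hasDerivAt_of_tendsto (hd x).continuousAt.continuousWithinAt
      (fun t _ ↦ hd t) hg'.integrableOn
      (tendsto_zero_of_hasDerivAt_of_integrableOn_Iic (fun t _ ↦ hd t)
        hg'.integrableOn hg.integrableOn (a := 0))
  have hright_le : |g x| ≤ ∫ t in Ioi x, |g' t| := by
    simpa [hright] using abs_integral_le_integral_abs (μ := volume.restrict (Ioi x)) (f := g')
  have hleft_le : |g x| ≤ ∫ t in Iic x, |g' t| := by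
    simpa [hleft] using abs_integral_le_integral_abs (μ := volume.restrict (Iic x)) (f := g')
  have hsplit := integral_add_compl (measurableSet_Iic (a := x)) hg'.abs
  rw [compl_Iic] at hsplit
  linarith

section

variable {E : Type*} [NormedAddCommGroup E] [InnerProductSpace ℝ E]

lemma enorm_sq_le_lintegral_enorm_mul_enorm_deriv {f f' : ℝ → E}
    (hd : ∀ t, HasDerivAt f (f' t) t) (hf : MemLp f 2) (hf' : MemLp f' 2) (x : ℝ) :
    ‖f x‖ₑ ^ 2 ≤ ∫⁻ t, ‖f t‖ₑ * ‖f' t‖ₑ := by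
  have hprod : Integrable (fun t ↦ ‖f t‖ * ‖f' t‖) := hf.norm.integrable_mul hf'.norm
  have hderiv_le : ∀ t, |2 * ⟪f t, f' t⟫| ≤ 2 * (‖f t‖ * ‖f' t‖) := fun t ↦ by
    rw [abs_mul, abs_two]
    exact mul_le_mul_of_nonneg_left (abs_real_inner_le_norm _ _) zero_le_two
  have hderiv : Integrable (fun t ↦ 2 * ⟪f t, f' t⟫) :=
    (hprod.const_mul 2).mono' ((hf.1.inner hf'.1).const_mul 2) (Eventually.of_forall hderiv_le)
  have hsq : 2 * ‖f x‖ ^ 2 ≤ 2 * ∫ t, ‖f t‖ * ‖f' t‖ :=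
    calc 2 * ‖f x‖ ^ 2 = 2 * |‖f x‖ ^ 2| := by rw [abs_of_nonneg (by positivity)]
      _ ≤ ∫ t, |2 * ⟪f t, f' t⟫| := two_mul_abs_le_integral_abs_deriv
          (fun t ↦ (hd t).norm_sq) ((memLp_two_iff_integrable_sq_norm hf.1).mp hf) hderiv x
      _ ≤ ∫ t, 2 * (‖f t‖ * ‖f' t‖) := integral_mono hderiv.abs (hprod.const_mul 2) hderiv_le
      _ = 2 * ∫ t, ‖f t‖ * ‖f' t‖ := integral_const_mul 2 _
  calc ‖f x‖ₑ ^ 2 = ENNReal.ofReal (‖f x‖ ^ 2) := by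
        rw [ENNReal.ofReal_pow (norm_nonneg _), ofReal_norm]
    _ ≤ ENNReal.ofReal (∫ t, ‖f t‖ * ‖f' t‖) := ENNReal.ofReal_le_ofReal (by linarith)
    _ = ∫⁻ t, ‖f t‖ₑ * ‖f' t‖ₑ := by
        rw [ofReal_integral_eq_lintegral_ofReal hprod (Eventually.of_forall fun t ↦ by positivity)]
        simp_rw [ENNReal.ofReal_mul (norm_nonneg _), ofReal_norm]

lemma ae_enorm_sq_le_lintegral_slice {β : Type*} [MeasurableSpace β] {ν : Measure β} [SFinite ν]
    {u u' : ℝ × β → E} (hd : ∀ p, HasDerivAt (fun x ↦ u (x, p.2)) (u' p) p.1)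
    (hu : MemLp u 2 (volume.prod ν)) (hu' : MemLp u' 2 (volume.prod ν)) :
    ∀ᵐ y ∂ν, ∀ x, ‖u (x, y)‖ₑ ^ 2 ≤ ∫⁻ t, ‖u (t, y)‖ₑ * ‖u' (t, y)‖ₑ := by
  filter_upwards [hu.prod_left_ae two_ne_zero ENNReal.ofNat_ne_top,
    hu'.prod_left_ae two_ne_zero ENNReal.ofNat_ne_top] with y hy hy'
  exact enorm_sq_le_lintegral_enorm_mul_enorm_deriv (fun t ↦ hd (t, y)) hy hy'

theorem lintegral_enorm_pow_four_le_of_hasDerivAt {u u₁ u₂ : ℝ × ℝ → E}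
    (h₁ : ∀ p, HasDerivAt (fun x ↦ u (x, p.2)) (u₁ p) p.1)
    (h₂ : ∀ p, HasDerivAt (fun y ↦ u (p.1, y)) (u₂ p) p.2)
    (hu : MemLp u 2) (hu₁ : MemLp u₁ 2) (hu₂ : MemLp u₂ 2) :
    ∫⁻ p, ‖u p‖ₑ ^ 4 ≤ (∫⁻ p, ‖u p‖ₑ * ‖u₁ p‖ₑ) * ∫⁻ p, ‖u p‖ₑ * ‖u₂ p‖ₑ := by
  have hswap : MeasurePreserving (Prod.swap : ℝ × ℝ → ℝ × ℝ) := Measure.measurePreserving_swap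
  have hslice₁ := ae_enorm_sq_le_lintegral_slice h₁ hu hu₁
  have hslice₂ := ae_enorm_sq_le_lintegral_slice (u := u ∘ Prod.swap) (u' := u₂ ∘ Prod.swap)
    (fun p ↦ h₂ p.swap) (hu.comp_measurePreserving hswap) (hu₂.comp_measurePreserving hswap)
  have hprod₁ : AEMeasurable (fun p ↦ ‖u p‖ₑ * ‖u₁ p‖ₑ) (volume.prod volume) :=
    hu.1.enorm.mul hu₁.1.enorm
  have hprod₂ : AEMeasurable (fun p ↦ ‖u p‖ₑ * ‖u₂ p‖ₑ) (volume.prod volume) :=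
    hu.1.enorm.mul hu₂.1.enorm
  calc ∫⁻ p, ‖u p‖ₑ ^ 4 = ∫⁻ p, ‖u p‖ₑ ^ 2 * ‖u p‖ₑ ^ 2 ∂(volume.prod volume) := by
        simp_rw [← pow_add]; rfl
    _ ≤ (∫⁻ y, ∫⁻ x, ‖u (x, y)‖ₑ * ‖u₁ (x, y)‖ₑ) * ∫⁻ x, ∫⁻ y, ‖u (x, y)‖ₑ * ‖u₂ (x, y)‖ₑ :=
        lintegral_mul_le_of_ae_le_slices hprod₁.lintegral_prod_left' hprod₂.lintegral_prod_right'
          hslice₁ hslice₂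
    _ = (∫⁻ p, ‖u p‖ₑ * ‖u₁ p‖ₑ) * ∫⁻ p, ‖u p‖ₑ * ‖u₂ p‖ₑ := by
        rw [Measure.volume_eq_prod, lintegral_prod_symm _ hprod₁, lintegral_prod _ hprod₂]

noncomputable def prodEquivEuclideanFinTwo : (ℝ × ℝ) ≃L[ℝ] EuclideanSpace ℝ (Fin 2) :=
  (ContinuousLinearEquiv.finTwoArrow ℝ ℝ).symm.trans (EuclideanSpace.equiv (Fin 2) ℝ).symm

lemma measurePreserving_prodEquivEuclideanFinTwo :
    MeasurePreserving prodEquivEuclideanFinTwo :=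
  (PiLp.volume_preserving_toLp (Fin 2)).comp (volume_preserving_finTwoArrow ℝ).symm

lemma lintegral_enorm_pow_four_le_eLpNorm_mul_eLpNorm_fderiv
    {v : EuclideanSpace ℝ (Fin 2) → E} (hv : Differentiable ℝ v) (hv₂ : MemLp v 2)
    (hDv : MemLp (fderiv ℝ v) 2) :
    ∫⁻ z, ‖v z‖ₑ ^ 4 ≤ (eLpNorm v 2 * eLpNorm (fderiv ℝ v) 2) ^ 2 := by
  set φ := prodEquivEuclideanFinTwo
  have hφ : MeasurePreserving φ := measurePreserving_prodEquivEuclideanFinTwo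
  have hφ_emb : MeasurableEmbedding φ := φ.toHomeomorph.measurableEmbedding
  have h₁ : ∀ p : ℝ × ℝ, HasDerivAt (fun x ↦ v (φ (x, p.2)))
      (fderiv ℝ v (φ p) (φ (1, 0))) p.1 := fun p ↦
    (hv (φ p)).hasFDerivAt.comp_hasDerivAt p.1 (φ.hasFDerivAt.comp_hasDerivAt p.1
      ((hasDerivAt_id p.1).prodMk (hasDerivAt_const p.1 p.2)))
  have h₂ : ∀ p : ℝ × ℝ, HasDerivAt (fun y ↦ v (φ (p.1, y)))
      (fderiv ℝ v (φ p) (φ (0, 1))) p.2 := fun p ↦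
    (hv (φ p)).hasFDerivAt.comp_hasDerivAt p.2 (φ.hasFDerivAt.comp_hasDerivAt p.2
      ((hasDerivAt_const p.2 p.1).prodMk (hasDerivAt_id p.2)))
  have hpartial : ∀ e : ℝ × ℝ, MemLp (fun p ↦ fderiv ℝ v (φ p) (φ e)) 2 :=
    fun e ↦ ((ContinuousLinearMap.apply ℝ E (φ e)).comp_memLp' hDv).comp_measurePreserving hφ
  have hpartial_le : ∀ e : ℝ × ℝ, ‖φ e‖ = 1 → ∀ p,
      ‖fderiv ℝ v (φ p) (φ e)‖ₑ ≤ ‖fderiv ℝ v (φ p)‖ₑ := fun e he p ↦ by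
    simpa [← ofReal_norm, he] using (fderiv ℝ v (φ p)).le_opENorm (φ e)
  calc ∫⁻ z, ‖v z‖ₑ ^ 4 = ∫⁻ p, ‖v (φ p)‖ₑ ^ 4 := (hφ.lintegral_comp_emb hφ_emb _).symm
    _ ≤ (∫⁻ p, ‖v (φ p)‖ₑ * ‖fderiv ℝ v (φ p) (φ (1, 0))‖ₑ) *
        ∫⁻ p, ‖v (φ p)‖ₑ * ‖fderiv ℝ v (φ p) (φ (0, 1))‖ₑ :=
      lintegral_enorm_pow_four_le_of_hasDerivAt (u := fun p ↦ v (φ p)) h₁ h₂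
        (hv₂.comp_measurePreserving hφ) (hpartial _) (hpartial _)
    _ ≤ (∫⁻ p, ‖v (φ p)‖ₑ * ‖fderiv ℝ v (φ p)‖ₑ) * ∫⁻ p, ‖v (φ p)‖ₑ * ‖fderiv ℝ v (φ p)‖ₑ := by
      gcongr with p p <;> apply hpartial_le <;>
        simp [φ, prodEquivEuclideanFinTwo, EuclideanSpace.norm_eq]
    _ = (∫⁻ z, ‖v z‖ₑ * ‖fderiv ℝ v z‖ₑ) ^ 2 := by
      rw [hφ.lintegral_comp_emb hφ_emb (fun z ↦ ‖v z‖ₑ * ‖fderiv ℝ v z‖ₑ), sq]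
    _ ≤ (eLpNorm v 2 volume * eLpNorm (fderiv ℝ v) 2 volume) ^ 2 := by
      gcongr
      exact lintegral_enorm_mul_enorm_le_eLpNorm_mul_eLpNorm hv₂.1 hDv.1

lemma eLpNorm_four_le_rpow_eLpNorm_mul_eLpNorm_fderiv
    {v : EuclideanSpace ℝ (Fin 2) → E} (hv : Differentiable ℝ v) (hv₂ : MemLp v 2)
    (hDv : MemLp (fderiv ℝ v) 2) :
    eLpNorm v 4 ≤ (eLpNorm v 2 * eLpNorm (fderiv ℝ v) 2) ^ (1 / 2 : ℝ) := by
  rw [eLpNorm_eq_lintegral_rpow_enorm_toReal (by norm_num) (by norm_num)]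
  calc (∫⁻ z, ‖v z‖ₑ ^ (4 : ℝ≥0∞).toReal) ^ (1 / (4 : ℝ≥0∞).toReal)
      ≤ ((eLpNorm v 2 volume * eLpNorm (fderiv ℝ v) 2 volume) ^ 2) ^ (1 / 4 : ℝ) := by
        refine ENNReal.rpow_le_rpow ?_ (by norm_num)
        simpa using lintegral_enorm_pow_four_le_eLpNorm_mul_eLpNorm_fderiv hv hv₂ hDv
    _ = (eLpNorm v 2 volume * eLpNorm (fderiv ℝ v) 2 volume) ^ (1 / 2 : ℝ) := by
        rw [← ENNReal.rpow_natCast, ← ENNReal.rpow_mul]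
        norm_num

end

/-- **Ladyzhenskaya inequality in dimension 2.**
For every vector field `v ∈ H¹(ℝ², ℝ²)`, one has
`‖v‖_{L⁴} ≤ 2^(1/4) ‖v‖_{L²}^(1/2) ‖∇v‖_{L²}^(1/2)`. -/
theorem ladyzhenskaya_2d
    (v : EuclideanSpace ℝ (Fin 2) → EuclideanSpace ℝ (Fin 2))
    (hv_diff : Differentiable ℝ v)
    (hv_L2 : MemLp v 2 (volume : Measure (EuclideanSpace ℝ (Fin 2))))
    (hgrad_L2 : MemLp (fun x => fderiv ℝ v x) 2
      (volume : Measure (EuclideanSpace ℝ (Fin 2)))) :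
    (eLpNorm v 4 (volume : Measure (EuclideanSpace ℝ (Fin 2)))).toReal ≤
      (2 : ℝ) ^ ((1 : ℝ)/4) *
        ((eLpNorm v 2 (volume : Measure (EuclideanSpace ℝ (Fin 2)))).toReal) ^ ((1 : ℝ)/2) *
        ((eLpNorm (fun x => fderiv ℝ v x) 2
            (volume : Measure (EuclideanSpace ℝ (Fin 2)))).toReal) ^ ((1 : ℝ)/2) := by
  have hfinite : (eLpNorm v 2 * eLpNorm (fderiv ℝ v) 2) ^ (1 / 2 : ℝ) ≠ ∞ :=
    ENNReal.rpow_ne_top_of_nonneg (by norm_num)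
      (ENNReal.mul_ne_top hv_L2.eLpNorm_ne_top hgrad_L2.eLpNorm_ne_top)
  calc (eLpNorm v 4 volume).toReal
      ≤ ((eLpNorm v 2 volume * eLpNorm (fderiv ℝ v) 2 volume) ^ (1 / 2 : ℝ)).toReal :=
        ENNReal.toReal_mono hfinite
          (eLpNorm_four_le_rpow_eLpNorm_mul_eLpNorm_fderiv hv_diff hv_L2 hgrad_L2)
    _ = 1 * ((eLpNorm v 2 volume).toReal ^ (1 / 2 : ℝ) *
          (eLpNorm (fderiv ℝ v) 2 volume).toReal ^ (1 / 2 : ℝ)) := by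
        rw [← ENNReal.toReal_rpow, ENNReal.toReal_mul,
          Real.mul_rpow (by positivity) (by positivity), one_mul]
    _ ≤ _ := by
        rw [mul_assoc]
        gcongr
        exact Real.one_le_rpow one_le_two (by norm_num)
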